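/- arXiv:0706.3336 — 3 statements merged into one kernel-verified Lean document; each statement's English description precedes it below -/
import Mathlib

section
/- If λ ∈ V is dominant integral for R⁺ and w_u ∈ W^M, then w_u(λ+ρ) − ρ_M is dominant for R_M; that is, 2⟨w_u(λ+ρ) − ρ_M, α⟩/⟨α,α⟩ ≥ 0 for every α ∈ R⁺ ∩ R_M. -/
open scoped RealInnerProductSpace

/-- The reflection `s_α(x) = x − (2⟨x,α⟩/⟨α,α⟩) α` in the hyperplane orthogonal
to `α`, as a map. -/
noncomputable def sRefl {V : Type} [NormedAddCommGroup V] [InnerProductSpace ℝ V]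
    (α : V) (x : V) : V :=
  x - ((2 * ⟪x, α⟫ / ⟪α, α⟫) : ℝ) • α

/-- The reflection group generated by the reflections `s_α`, `α ∈ R`, viewed inside
the group of linear automorphisms of `V` (the reflections are orthogonal maps). -/
noncomputable def reflGroup {V : Type} [NormedAddCommGroup V] [InnerProductSpace ℝ V]
    (R : Finset V) : Subgroup (V ≃ₗ[ℝ] V) :=
  Subgroup.closure {w : V ≃ₗ[ℝ] V | ∃ α ∈ R, ∀ x, w x = sRefl α x}

/-- The set of positive roots determined by a regular element `H`. -/
noncomputable def posRoots {V : Type} [NormedAddCommGroup V] [InnerProductSpace ℝ V]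
    (R : Finset V) (H : V) : Finset V :=
  R.filter (fun α => 0 < ⟪α, H⟫)

open Classical in
/-- The positive roots of the subsystem `R_M`, namely `R⁺ ∩ R_M`. -/
noncomputable def posRootsM {V : Type} [NormedAddCommGroup V] [InnerProductSpace ℝ V]
    (R RM : Finset V) (H : V) : Finset V :=
  (posRoots R H).filter (fun α => α ∈ RM)

/-- `W^M = {w ∈ W : w⁻¹β ∈ R⁺ for every β ∈ R⁺ ∩ R_M}`. -/
noncomputable def WupperM {V : Type} [NormedAddCommGroup V] [InnerProductSpace ℝ V]
    (R RM : Finset V) (H : V) : Set (V ≃ₗ[ℝ] V) :=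
  {w | w ∈ reflGroup R ∧
    ∀ β ∈ RM, β ∈ posRoots R H → w⁻¹ β ∈ posRoots R H}

/-- The half sum `ρ` of the positive roots. -/
noncomputable def halfSum {V : Type} [NormedAddCommGroup V] [InnerProductSpace ℝ V]
    (P : Finset V) : V :=
  (1 / 2 : ℝ) • ∑ α ∈ P, α

namespace DomAux

variable {V : Type} [NormedAddCommGroup V] [InnerProductSpace ℝ V]

/-- `2⟨x,α⟩/⟨α,α⟩`. -/
noncomputable def pairNum (x α : V) : ℝ := 2 * ⟪x, α⟫ / ⟪α, α⟫

lemma sRefl_eq (α x : V) : sRefl α x = x - pairNum x α • α := rfl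

lemma inner_self_ne (α : V) (hα : α ≠ 0) : (⟪α, α⟫ : ℝ) ≠ 0 :=
  inner_self_ne_zero.mpr hα

lemma inner_self_pos' (α : V) (hα : α ≠ 0) : (0:ℝ) < ⟪α, α⟫ :=
  real_inner_self_nonneg.lt_of_ne (Ne.symm (inner_self_ne_zero.mpr hα))

lemma pairNum_self (α : V) (hα : α ≠ 0) : pairNum α α = 2 := by
  have hA := inner_self_ne α hα
  unfold pairNum
  field_simp

lemma inner_sRefl_left (α : V) (hα : α ≠ 0) (x y : V) :
    (⟪sRefl α x, y⟫ : ℝ) = ⟪x, y⟫ - pairNum x α * ⟪α, y⟫ := by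
  simp [sRefl_eq, inner_sub_left, real_inner_smul_left]

lemma pairNum_sRefl (α : V) (hα : α ≠ 0) (x : V) :
    pairNum (sRefl α x) α = - pairNum x α := by
  have hA := inner_self_ne α hα
  unfold pairNum
  rw [inner_sRefl_left α hα]
  unfold pairNum
  field_simp
  ring

lemma sRefl_self (α : V) (hα : α ≠ 0) : sRefl α α = -α := by
  rw [sRefl_eq, pairNum_self α hα, two_smul]
  abel

lemma sRefl_sRefl (α : V) (hα : α ≠ 0) (x : V) : sRefl α (sRefl α x) = x := by
  rw [sRefl_eq (x := sRefl α x), pairNum_sRefl α hα, sRefl_eq]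
  module

lemma inner_sRefl_sRefl (α : V) (hα : α ≠ 0) (x y : V) :
    (⟪sRefl α x, sRefl α y⟫ : ℝ) = ⟪x, y⟫ := by
  have hA := inner_self_ne α hα
  simp only [sRefl, inner_sub_left, inner_sub_right, real_inner_smul_left,
    real_inner_smul_right]
  rw [real_inner_comm α y, real_inner_comm α x]
  field_simp
  ring



section Group

variable {V : Type} [NormedAddCommGroup V] [InnerProductSpace ℝ V]

lemma reflGroup_inner {R : Finset V} (hR0 : (0:V) ∉ R) {w : V ≃ₗ[ℝ] V}
    (hw : w ∈ reflGroup R) : ∀ x y : V, ⟪w x, w y⟫ = ⟪x, y⟫ := by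
  refine Subgroup.closure_induction ?_ ?_ ?_ ?_ hw
  · rintro g ⟨α, hαR, hg⟩ x y
    have hα : α ≠ 0 := fun h => hR0 (h ▸ hαR)
    rw [hg, hg]; exact inner_sRefl_sRefl α hα x y
  · intro x y; rfl
  · intro g h _ _ hg hh x y
    exact (hg (h x) (h y)).trans (hh x y)
  · intro g _ hg x y
    have := hg (g⁻¹ x) (g⁻¹ y)
    rw [show g (g⁻¹ x) = x from g.apply_symm_apply x,
      show g (g⁻¹ y) = y from g.apply_symm_apply y] at this
    exact this.symm

lemma reflGroup_inner_left {R : Finset V} (hR0 : (0:V) ∉ R) {w : V ≃ₗ[ℝ] V}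
    (hw : w ∈ reflGroup R) (x y : V) : ⟪w x, y⟫ = ⟪x, w⁻¹ y⟫ := by
  have h1 : y = w (w⁻¹ y) := (w.apply_symm_apply y).symm
  calc ⟪w x, y⟫ = ⟪w x, w (w⁻¹ y)⟫ := by rw [← h1]
    _ = ⟪x, w⁻¹ y⟫ := reflGroup_inner hR0 hw x (w⁻¹ y)

end Group

section RootSys

variable {V : Type} [NormedAddCommGroup V] [InnerProductSpace ℝ V]
variable {R : Finset V} {H : V} {T : Finset V}

open Finset

lemma mem_posRootsM {α : V} :
    α ∈ posRootsM R T H ↔ α ∈ R ∧ 0 < ⟪α, H⟫ ∧ α ∈ T := by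
  simp [posRootsM, posRoots, Finset.mem_filter, and_assoc]

lemma posRootsM_self : posRootsM R R H = posRoots R H := by
  ext α
  simp only [posRootsM, posRoots, Finset.mem_filter, and_assoc]
  tauto

section Core

variable (hR0 : (0 : V) ∉ R)
  (hRred : ∀ α ∈ R, ∀ c : ℝ, c • α ∈ R → c = 1 ∨ c = -1)
  (hcrys : ∀ α ∈ R, ∀ β ∈ R, ∃ k : ℤ, 2 * ⟪α, β⟫ / ⟪β, β⟫ = (k : ℝ))
  (hH : ∀ α ∈ R, ⟪α, H⟫ ≠ 0)
  (hTR : T ⊆ R)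
  (hTcl : ∀ α ∈ T, ∀ β ∈ T, sRefl α β ∈ T)

include hR0 hH hTR hTcl

/-- negation closure of `T` -/
lemma neg_mem_T {α : V} (hα : α ∈ T) : -α ∈ T := by
  have h := hTcl α hα α hα
  rwa [sRefl_self α (fun h0 => hR0 (h0 ▸ hTR hα))] at h

/-- If `β` is a positive root of the subsystem and `⟪sRefl α β, H⟫ < 0` then
`pairNum β α • α - β` is again a positive root of the subsystem. -/
lemma neg_sRefl_mem {α β : V} (hα : α ∈ posRootsM R T H) (hβ : β ∈ posRootsM R T H)
    (hneg : ⟪sRefl α β, H⟫ < 0) :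
    -(sRefl α β) ∈ posRootsM R T H := by
  obtain ⟨hαR, hαH, hαT⟩ := mem_posRootsM.mp hα
  obtain ⟨hβR, hβH, hβT⟩ := mem_posRootsM.mp hβ
  have hmemT : sRefl α β ∈ T := hTcl α hαT β hβT
  have hnT : -(sRefl α β) ∈ T := neg_mem_T hR0 hH hTR hTcl hmemT
  refine mem_posRootsM.mpr ⟨hTR hnT, ?_, hnT⟩
  rw [inner_neg_left]
  linarith

end Core


/-- Strict Cauchy–Schwarz for the integer pairings. -/
lemma pair_mul_lt_four {α γ : V} (hα : α ≠ 0) (hγ : γ ≠ 0)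
    (hind : ∀ r : ℝ, γ ≠ r • α) : pairNum γ α * pairNum α γ < 4 := by
  have hA := inner_self_pos' α hα
  have hG := inner_self_pos' γ hγ
  have hcs : ⟪α, γ⟫ * ⟪α, γ⟫ ≤ ⟪α, α⟫ * ⟪γ, γ⟫ := real_inner_mul_inner_self_le α γ
  have hne : ⟪α, γ⟫ * ⟪α, γ⟫ ≠ ⟪α, α⟫ * ⟪γ, γ⟫ := by
    intro heq
    have h2 : (⟪α, γ⟫ : ℝ) ^ 2 = (‖α‖ * ‖γ‖) ^ 2 := by
      rw [mul_pow, ← real_inner_self_eq_norm_sq, ← real_inner_self_eq_norm_sq, pow_two, heq]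
    have h3 : |(⟪α, γ⟫ : ℝ)| = ‖α‖ * ‖γ‖ := by
      rw [sq_eq_sq_iff_abs_eq_abs] at h2
      rwa [abs_of_nonneg (by positivity : (0:ℝ) ≤ ‖α‖ * ‖γ‖)] at h2
    obtain ⟨r, _, hr⟩ := (norm_inner_eq_norm_iff (𝕜 := ℝ) hα hγ).mp
      (by rw [Real.norm_eq_abs]; exact h3)
    exact hind r hr
  have hlt := lt_of_le_of_ne hcs hne
  unfold pairNum
  rw [real_inner_comm α γ, div_mul_div_comm, div_lt_iff₀ (mul_pos hA hG)]
  nlinarith [hlt]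

section Core2

variable (hR0 : (0 : V) ∉ R)
  (hRred : ∀ α ∈ R, ∀ c : ℝ, c • α ∈ R → c = 1 ∨ c = -1)
  (hcrys : ∀ α ∈ R, ∀ β ∈ R, ∃ k : ℤ, 2 * ⟪α, β⟫ / ⟪β, β⟫ = (k : ℝ))
  (hH : ∀ α ∈ R, ⟪α, H⟫ ≠ 0)
  (hTR : T ⊆ R)
  (hTcl : ∀ α ∈ T, ∀ β ∈ T, sRefl α β ∈ T)

include hR0 hcrys hH hTR hTcl

/-- Roots in the "negative set" of `α` pair integrally and positively with `α`. -/
lemma pairNum_pos_int {α β : V} (hα : α ∈ posRootsM R T H) (hβ : β ∈ posRootsM R T H)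
    (hneg : ⟪sRefl α β, H⟫ < 0) :
    ∃ k : ℤ, pairNum β α = (k : ℝ) ∧ 1 ≤ k := by
  obtain ⟨hαR, hαH, hαT⟩ := mem_posRootsM.mp hα
  obtain ⟨hβR, hβH, hβT⟩ := mem_posRootsM.mp hβ
  have hα0 : α ≠ 0 := fun h => hR0 (h ▸ hαR)
  obtain ⟨k, hk⟩ := hcrys β hβR α hαR
  refine ⟨k, hk, ?_⟩
  rw [inner_sRefl_left α hα0] at hneg
  have hkpos : (0 : ℝ) < (k : ℝ) := by
    rw [show pairNum β α = (k : ℝ) from hk] at hneg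
    nlinarith
  exact_mod_cast hkpos

omit hcrys in
open Classical in
/-- Splitting the pairing sum over the positive roots of the subsystem. -/
lemma sum_pairNum {α : V} (hα : α ∈ posRootsM R T H) :
    ∑ β ∈ posRootsM R T H, pairNum β α
      = 2 + ∑ β ∈ ((posRootsM R T H).erase α).filter (fun β => ⟪sRefl α β, H⟫ < 0),
          pairNum β α := by
  classical
  set S := posRootsM R T H with hS
  obtain ⟨hαR, hαH, hαT⟩ := mem_posRootsM.mp hα
  have hα0 : α ≠ 0 := fun h => hR0 (h ▸ hαR)
  rw [← Finset.add_sum_erase S _ hα, pairNum_self α hα0]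
  congr 1
  rw [← Finset.sum_filter_add_sum_filter_not (S.erase α) (fun β => ⟪sRefl α β, H⟫ < 0)
    (fun β => pairNum β α)]
  have hzero : ∑ β ∈ (S.erase α).filter (fun β => ¬⟪sRefl α β, H⟫ < 0), pairNum β α = 0 := by
    refine Finset.sum_involution (fun β _ => sRefl α β) ?_ ?_ ?_ ?_
    · intro β _
      show pairNum β α + pairNum (sRefl α β) α = 0
      rw [pairNum_sRefl α hα0]; ring
    · intro β _ hfβ heq
      replace heq : sRefl α β = β := heq
      apply hfβ
      have h0 : pairNum β α • α = 0 := by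
        have := sRefl_eq α β
        rw [heq] at this
        have := sub_eq_self.mp this.symm
        exact this
      rcases smul_eq_zero.mp h0 with h | h
      · exact h
      · exact absurd h hα0
    · intro β hβmem
      show sRefl α β ∈ (S.erase α).filter (fun β => ¬⟪sRefl α β, H⟫ < 0)
      obtain ⟨hβe, hβpos⟩ := Finset.mem_filter.mp hβmem
      obtain ⟨hβne, hβS⟩ := Finset.mem_erase.mp hβe
      obtain ⟨hβR, hβH, hβT⟩ := mem_posRootsM.mp hβS
      have hsT : sRefl α β ∈ T := hTcl α hαT β hβT
      have hsR : sRefl α β ∈ R := hTR hsT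
      have hsH : 0 < ⟪sRefl α β, H⟫ := lt_of_le_of_ne (not_lt.mp hβpos) (Ne.symm (hH _ hsR))
      have hsS : sRefl α β ∈ S := mem_posRootsM.mpr ⟨hsR, hsH, hsT⟩
      refine Finset.mem_filter.mpr ⟨Finset.mem_erase.mpr ⟨?_, hsS⟩, ?_⟩
      · intro heq
        have : β = -α := by
          have h1 := sRefl_sRefl α hα0 β
          rw [heq, sRefl_self α hα0] at h1
          exact h1.symm
        rw [this, inner_neg_left] at hβH
        linarith
      · rw [sRefl_sRefl α hα0 β]
        simp only [not_lt]
        exact le_of_lt hβH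
    · intro β _
      show sRefl α (sRefl α β) = β
      exact sRefl_sRefl α hα0 β
  rw [hzero, add_zero]

omit hcrys hH hTR hTcl in
/-- The pairing of `α` with the half sum of positive roots of the subsystem. -/
lemma pairNum_halfSum {α : V} (hα : α ∈ posRootsM R T H) :
    pairNum (halfSum (posRootsM R T H)) α
      = (1 / 2) * ∑ β ∈ posRootsM R T H, pairNum β α := by
  obtain ⟨hαR, _, _⟩ := mem_posRootsM.mp hα
  have hα0 : α ≠ 0 := fun h => hR0 (h ▸ hαR)
  have hA := inner_self_ne α hα0
  unfold pairNum halfSum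
  have hsplit : 2 * ((1/2 : ℝ) * ∑ β ∈ posRootsM R T H, ⟪β, α⟫) / ⟪α, α⟫
      = ∑ β ∈ posRootsM R T H, ⟪β, α⟫ / ⟪α, α⟫ := by
    rw [← Finset.sum_div]; ring_nf
  rw [real_inner_smul_left, sum_inner, hsplit, Finset.mul_sum]
  exact Finset.sum_congr rfl fun β _ => by ring

open Classical in
lemma one_le_pairNum_halfSum {α : V} (hα : α ∈ posRootsM R T H) :
    1 ≤ pairNum (halfSum (posRootsM R T H)) α := by
  rw [pairNum_halfSum hR0 hα, sum_pairNum hR0 hH hTR hTcl hα]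
  have hnn : 0 ≤ ∑ β ∈ ((posRootsM R T H).erase α).filter (fun β => ⟪sRefl α β, H⟫ < 0),
      pairNum β α := by
    refine Finset.sum_nonneg fun β hβ => ?_
    obtain ⟨hβe, hβneg⟩ := Finset.mem_filter.mp hβ
    obtain ⟨k, hk, hk1⟩ := pairNum_pos_int hR0 hcrys hH hTR hTcl hα
      (Finset.mem_erase.mp hβe).2 hβneg
    rw [hk]
    exact_mod_cast le_trans zero_le_one hk1
  linarith

end Core2


section Core3

variable (hR0 : (0 : V) ∉ R)
  (hRred : ∀ α ∈ R, ∀ c : ℝ, c • α ∈ R → c = 1 ∨ c = -1)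
  (hcrys : ∀ α ∈ R, ∀ β ∈ R, ∃ k : ℤ, 2 * ⟪α, β⟫ / ⟪β, β⟫ = (k : ℝ))
  (hH : ∀ α ∈ R, ⟪α, H⟫ ≠ 0)
  (hTR : T ⊆ R)
  (hTcl : ∀ α ∈ T, ∀ β ∈ T, sRefl α β ∈ T)

include hR0 hRred hcrys hH hTR hTcl

/-- A positive root of the subsystem whose pairing with the half sum exceeds `1`
decomposes as a sum of two positive roots of the subsystem. -/
lemma decompose {α : V} (hα : α ∈ posRootsM R T H)
    (hgt : 1 < pairNum (halfSum (posRootsM R T H)) α) :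
    ∃ β ∈ posRootsM R T H, ∃ γ ∈ posRootsM R T H, α = β + γ := by
  classical
  set S := posRootsM R T H with hSdef
  obtain ⟨hαR, hαH, hαT⟩ := mem_posRootsM.mp hα
  have hα0 : α ≠ 0 := fun h => hR0 (h ▸ hαR)
  have hA := inner_self_pos' α hα0
  have hAne : (⟪α, α⟫ : ℝ) ≠ 0 := ne_of_gt hA
  -- the negative set is nonempty
  have hsum : 0 < ∑ β ∈ (S.erase α).filter (fun β => ⟪sRefl α β, H⟫ < 0), pairNum β α := by
    have h1 := pairNum_halfSum hR0 hα
    have h2 := sum_pairNum hR0 hH hTR hTcl hα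
    rw [h1, h2] at hgt
    linarith
  have hne : ((S.erase α).filter (fun β => ⟪sRefl α β, H⟫ < 0)).Nonempty := by
    by_contra hcon
    rw [Finset.not_nonempty_iff_eq_empty] at hcon
    rw [hcon, Finset.sum_empty] at hsum
    exact lt_irrefl 0 hsum
  obtain ⟨γ, hγmem⟩ := hne
  obtain ⟨hγe, hγneg⟩ := Finset.mem_filter.mp hγmem
  obtain ⟨hγne, hγS⟩ := Finset.mem_erase.mp hγe
  obtain ⟨hγR, hγH, hγT⟩ := mem_posRootsM.mp hγS
  have hγ0 : γ ≠ 0 := fun h => hR0 (h ▸ hγR)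
  obtain ⟨k, hk, hk1⟩ := pairNum_pos_int hR0 hcrys hH hTR hTcl hα hγS hγneg
  have hk' : 2 * ⟪γ, α⟫ / ⟪α, α⟫ = (k : ℝ) := hk
  have hk1R : (1 : ℝ) ≤ (k : ℝ) := by exact_mod_cast hk1
  -- γ' = kα - γ is a positive root of the subsystem
  have hγ'S : -(sRefl α γ) ∈ S := neg_sRefl_mem hR0 hH hTR hTcl hα hγS hγneg
  set γ' : V := -(sRefl α γ) with hγ'def
  have hγ'eq : γ' = (k : ℝ) • α - γ := by
    rw [hγ'def, sRefl_eq, show pairNum γ α = (k : ℝ) from hk]; abel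
  have hsum' : γ + γ' = (k : ℝ) • α := by rw [hγ'eq]; abel
  obtain ⟨hγ'R, hγ'H, hγ'T⟩ := mem_posRootsM.mp hγ'S
  have hγ'0 : γ' ≠ 0 := fun h => hR0 (h ▸ hγ'R)
  -- non-proportionality of γ and γ' with α
  have hnotlin : ∀ r : ℝ, γ ≠ r • α := by
    intro r hr
    rcases hRred α hαR r (hr ▸ hγR) with h1 | h1
    · rw [h1, one_smul] at hr; exact hγne hr
    · rw [h1, neg_one_smul] at hr
      rw [hr, inner_neg_left] at hγH; linarith
  have hnotlin' : ∀ r : ℝ, γ' ≠ r • α := by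
    intro r hr
    apply hnotlin ((k : ℝ) - r)
    rw [sub_smul, ← hr, hγ'eq]; abel
  rcases eq_or_lt_of_le hk1 with hk1' | hk2
  · -- k = 1 : α = γ + γ'
    refine ⟨γ, hγS, γ', hγ'S, ?_⟩
    rw [hsum', ← hk1']
    simp
  · -- 2 ≤ k
    have hk2 : (2 : ℤ) ≤ k := hk2
    have hγ'k : 2 * ⟪γ', α⟫ / ⟪α, α⟫ = (k : ℝ) := by
      rw [hγ'eq, inner_sub_left, real_inner_smul_left]
      have hkA : 2 * ⟪γ, α⟫ = (k : ℝ) * ⟪α, α⟫ := by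
        rw [← hk']; field_simp
      field_simp
      linarith
    -- for δ ∈ {γ, γ'} the reverse pairing is 1
    have main : ∀ δ : V, δ ∈ R → δ ≠ 0 → (∀ r : ℝ, δ ≠ r • α) →
        2 * ⟪δ, α⟫ / ⟪α, α⟫ = (k : ℝ) → 2 * ⟪α, δ⟫ / ⟪δ, δ⟫ = 1 := by
      intro δ hδR hδ0 hδlin hδk
      obtain ⟨m, hm⟩ := hcrys α hαR δ hδR
      have hδA : 0 < ⟪δ, α⟫ := by
        have h2 : 2 * ⟪δ, α⟫ = (k : ℝ) * ⟪α, α⟫ := by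
          rw [← hδk]; field_simp
        nlinarith
      have hm1 : 1 ≤ m := by
        have hpos : 0 < 2 * ⟪α, δ⟫ / ⟪δ, δ⟫ := by
          rw [real_inner_comm δ α]
          exact div_pos (by linarith) (inner_self_pos' δ hδ0)
        rw [hm] at hpos
        exact_mod_cast hpos
      have hmul : (2 * ⟪δ, α⟫ / ⟪α, α⟫) * (2 * ⟪α, δ⟫ / ⟪δ, δ⟫) < 4 :=
        pair_mul_lt_four hα0 hδ0 hδlin
      rw [hδk, hm] at hmul
      have hkm : k * m < 4 := by exact_mod_cast hmul
      have hmeq : m = 1 := by nlinarith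
      rw [hm, hmeq]; norm_num
    have hαγ1 : 2 * ⟪α, γ⟫ / ⟪γ, γ⟫ = 1 := main γ hγR hγ0 hnotlin hk'
    have hαγ'1 : 2 * ⟪α, γ'⟫ / ⟪γ', γ'⟫ = 1 := main γ' hγ'R hγ'0 hnotlin' hγ'k
    -- k ≤ 3
    have hk3 : k ≤ 3 := by
      have hmul : (2 * ⟪γ, α⟫ / ⟪α, α⟫) * (2 * ⟪α, γ⟫ / ⟪γ, γ⟫) < 4 :=
        pair_mul_lt_four hα0 hγ0 hnotlin
      rw [hk', hαγ1, mul_one] at hmul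
      have : k < 4 := by exact_mod_cast hmul
      omega
    -- reflections give α - γ and α - γ' as roots of the subsystem
    have hd1T : α - γ ∈ T := by
      have h := hTcl γ hγT α hαT
      rwa [show sRefl γ α = α - (2 * ⟪α, γ⟫ / ⟪γ, γ⟫ : ℝ) • γ from rfl, hαγ1, one_smul] at h
    have hd2T : α - γ' ∈ T := by
      have h := hTcl γ' hγ'T α hαT
      rwa [show sRefl γ' α = α - (2 * ⟪α, γ'⟫ / ⟪γ', γ'⟫ : ℝ) • γ' from rfl, hαγ'1,
        one_smul] at h
    have hd1R : α - γ ∈ R := hTR hd1T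
    have hd2R : α - γ' ∈ R := hTR hd2T
    have ht1 : ⟪α - γ, H⟫ ≠ 0 := hH _ hd1R
    have ht2 : ⟪α - γ', H⟫ ≠ 0 := hH _ hd2R
    have htsum : ⟪α - γ, H⟫ + ⟪α - γ', H⟫ = (2 - (k : ℝ)) * ⟪α, H⟫ := by
      rw [inner_sub_left, inner_sub_left]
      have h4 : ⟪γ, H⟫ + ⟪γ', H⟫ = (k : ℝ) * ⟪α, H⟫ := by
        rw [← inner_add_left, hsum', real_inner_smul_left]
      linarith
    rcases lt_or_gt_of_ne ht1 with ht1n | ht1p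
    · rcases lt_or_gt_of_ne ht2 with ht2n | ht2p
      · -- both negative: k = 3 and α = (γ - α) + (γ' - α)
        have hk3' : k = 3 := by
          have hkne2 : k ≠ 2 := by
            intro h
            rw [h] at htsum
            push_cast at htsum
            linarith
          omega
        have hd1S : γ - α ∈ S := by
          have hT' : γ - α ∈ T := by
            have := neg_mem_T hR0 hH hTR hTcl hd1T
            rwa [neg_sub] at this
          refine mem_posRootsM.mpr ⟨hTR hT', ?_, hT'⟩
          rw [show γ - α = -(α - γ) by abel, inner_neg_left]; linarith
        have hd2S : γ' - α ∈ S := by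
          have hT' : γ' - α ∈ T := by
            have := neg_mem_T hR0 hH hTR hTcl hd2T
            rwa [neg_sub] at this
          refine mem_posRootsM.mpr ⟨hTR hT', ?_, hT'⟩
          rw [show γ' - α = -(α - γ') by abel, inner_neg_left]; linarith
        refine ⟨γ - α, hd1S, γ' - α, hd2S, ?_⟩
        have h3 : γ + γ' = (3 : ℝ) • α := by
          rw [hsum', hk3']; norm_num
        have hre : (γ - α) + (γ' - α) = (γ + γ') - (2 : ℝ) • α := by module
        rw [hre, h3]
        module
      · refine ⟨γ', hγ'S, α - γ', ?_, by abel⟩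
        exact mem_posRootsM.mpr ⟨hd2R, ht2p, hd2T⟩
    · refine ⟨γ, hγS, α - γ, ?_, by abel⟩
      exact mem_posRootsM.mpr ⟨hd1R, ht1p, hd1T⟩

end Core3



section Core4

variable (hR0 : (0 : V) ∉ R)
  (hRred : ∀ α ∈ R, ∀ c : ℝ, c • α ∈ R → c = 1 ∨ c = -1)
  (hcrys : ∀ α ∈ R, ∀ β ∈ R, ∃ k : ℤ, 2 * ⟪α, β⟫ / ⟪β, β⟫ = (k : ℝ))
  (hH : ∀ α ∈ R, ⟪α, H⟫ ≠ 0)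
  (hTR : T ⊆ R)
  (hTcl : ∀ α ∈ T, ∀ β ∈ T, sRefl α β ∈ T)

include hR0 hRred hcrys hH hTR hTcl

open Classical in
/-- If `ν` pairs `≥ 1` with every positive root of the subsystem, then
`ν - ρ_T` pairs nonnegatively with every positive root of the subsystem. -/
lemma dominant_sub_halfSum {ν : V} (hν : ∀ α ∈ posRootsM R T H, 1 ≤ pairNum ν α) :
    ∀ α ∈ posRootsM R T H, 0 ≤ ⟪ν - halfSum (posRootsM R T H), α⟫ := by
  classical
  set S := posRootsM R T H with hSdef
  suffices h : ∀ n : ℕ, ∀ α ∈ S, (S.filter (fun β => ⟪β, H⟫ < ⟪α, H⟫)).card ≤ n →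
      0 ≤ ⟪ν - halfSum S, α⟫ by
    intro α hα
    exact h (S.filter (fun β => ⟪β, H⟫ < ⟪α, H⟫)).card α hα le_rfl
  intro n
  induction n using Nat.strong_induction_on with
  | _ n ih =>
    intro α hα hcard
    obtain ⟨hαR, hαH, hαT⟩ := mem_posRootsM.mp hα
    have hα0 : α ≠ 0 := fun h => hR0 (h ▸ hαR)
    have hA := inner_self_pos' α hα0
    by_cases hle : pairNum (halfSum S) α ≤ 1
    · -- use the pairing bounds directly
      have h1 := hν α hα
      have h2 : 2 * ⟪halfSum S, α⟫ / ⟪α, α⟫ ≤ 2 * ⟪ν, α⟫ / ⟪α, α⟫ := le_trans hle h1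
      rw [div_le_div_iff_of_pos_right hA] at h2
      rw [inner_sub_left]
      linarith
    · -- decompose α and use induction
      obtain ⟨β, hβ, γ, hγ, hαβγ⟩ :=
        decompose hR0 hRred hcrys hH hTR hTcl hα (lt_of_not_ge hle)
      obtain ⟨hβR, hβH, hβT⟩ := mem_posRootsM.mp hβ
      obtain ⟨hγR, hγH, hγT⟩ := mem_posRootsM.mp hγ
      have hβα : ⟪β, H⟫ < ⟪α, H⟫ := by
        rw [hαβγ, inner_add_left]; linarith
      have hγα : ⟪γ, H⟫ < ⟪α, H⟫ := by
        rw [hαβγ, inner_add_left]; linarith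
      have key : ∀ δ : V, δ ∈ S → ⟪δ, H⟫ < ⟪α, H⟫ → 0 ≤ ⟪ν - halfSum S, δ⟫ := by
        intro δ hδ hδα
        have hsubset : S.filter (fun β' => ⟪β', H⟫ < ⟪δ, H⟫)
            ⊆ S.filter (fun β' => ⟪β', H⟫ < ⟪α, H⟫) := by
          intro x hx
          obtain ⟨hx1, hx2⟩ := Finset.mem_filter.mp hx
          exact Finset.mem_filter.mpr ⟨hx1, lt_trans hx2 hδα⟩
        have hmemdiff : δ ∈ S.filter (fun β' => ⟪β', H⟫ < ⟪α, H⟫) :=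
          Finset.mem_filter.mpr ⟨hδ, hδα⟩
        have hnotmem : δ ∉ S.filter (fun β' => ⟪β', H⟫ < ⟪δ, H⟫) := by
          intro hmem
          exact lt_irrefl _ (Finset.mem_filter.mp hmem).2
        have hlt : (S.filter (fun β' => ⟪β', H⟫ < ⟪δ, H⟫)).card
            < (S.filter (fun β' => ⟪β', H⟫ < ⟪α, H⟫)).card :=
          Finset.card_lt_card (Finset.ssubset_iff_of_subset hsubset |>.mpr
            ⟨δ, hmemdiff, hnotmem⟩)
        exact ih _ (lt_of_lt_of_le hlt hcard) δ hδ le_rfl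
      have hβ0 := key β hβ hβα
      have hγ0 := key γ hγ hγα
      rw [hαβγ, inner_add_right]
      linarith

end Core4

end RootSys

end DomAux
/-- In a crystallographic reduced root system, if `λ` is dominant
integral for `R⁺` and `w_u ∈ W^M`, then `w_u(λ+ρ) − ρ_M` is dominant for `R_M`:
`2⟨w_u(λ+ρ) − ρ_M, α⟩/⟨α,α⟩ ≥ 0` for every `α ∈ R⁺ ∩ R_M`. -/
theorem dominant_after_WupperM
    {V : Type} [NormedAddCommGroup V] [InnerProductSpace ℝ V] [FiniteDimensional ℝ V]
    (R : Finset V) (hR0 : (0 : V) ∉ R)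
    (hRrefl : ∀ α ∈ R, ∀ β ∈ R, sRefl α β ∈ R)
    (hRred : ∀ α ∈ R, ∀ c : ℝ, c • α ∈ R → c = 1 ∨ c = -1)
    (hcrys : ∀ α ∈ R, ∀ β ∈ R, ∃ k : ℤ, 2 * ⟪α, β⟫ / ⟪β, β⟫ = (k : ℝ))
    (H : V) (hH : ∀ α ∈ R, ⟪α, H⟫ ≠ 0)
    (RM : Finset V) (hRM : RM ⊆ R)
    (hclosed : ∀ α ∈ RM, ∀ β ∈ RM, sRefl α β ∈ RM)
    (lam : V)
    (hdom : ∀ α ∈ posRoots R H, ∃ k : ℕ, 2 * ⟪lam, α⟫ / ⟪α, α⟫ = (k : ℝ))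
    (wu : V ≃ₗ[ℝ] V) (hwu : wu ∈ WupperM R RM H) :
    ∀ α ∈ posRootsM R RM H,
      0 ≤ 2 * ⟪wu (lam + halfSum (posRoots R H)) - halfSum (posRootsM R RM H), α⟫
            / ⟪α, α⟫ := by
  classical
  intro α hα
  obtain ⟨hwuG, hwuM⟩ := hwu
  set ν := wu (lam + halfSum (posRoots R H)) with hνdef
  have hν : ∀ δ ∈ posRootsM R RM H, 1 ≤ DomAux.pairNum ν δ := by
    intro δ hδ
    obtain ⟨hδR, hδH, hδM⟩ := DomAux.mem_posRootsM.mp hδ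
    have hδpos : δ ∈ posRoots R H := Finset.mem_filter.mpr ⟨hδR, hδH⟩
    have hβpos := hwuM δ hδM hδpos
    set β := wu⁻¹ δ with hβdef
    have hwβ : wu β = δ := wu.apply_symm_apply δ
    have e1 : ⟪ν, δ⟫ = ⟪lam + halfSum (posRoots R H), β⟫ := by
      conv_lhs => rw [hνdef, ← hwβ]
      exact DomAux.reflGroup_inner hR0 hwuG _ _
    have e2 : (⟪δ, δ⟫ : ℝ) = ⟪β, β⟫ := by
      conv_lhs => rw [← hwβ]
      exact DomAux.reflGroup_inner hR0 hwuG β β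
    have hβR : β ∈ R := (Finset.mem_filter.mp hβpos).1
    have hβ0 : β ≠ 0 := fun h => hR0 (h ▸ hβR)
    have hB := DomAux.inner_self_pos' β hβ0
    obtain ⟨kn, hkn⟩ := hdom β hβpos
    have hlam : 0 ≤ 2 * ⟪lam, β⟫ / ⟪β, β⟫ := by rw [hkn]; positivity
    have hβ' : β ∈ posRootsM R R H := by
      rw [DomAux.posRootsM_self]; exact hβpos
    have hρ : 1 ≤ 2 * ⟪halfSum (posRoots R H), β⟫ / ⟪β, β⟫ := by
      have h := DomAux.one_le_pairNum_halfSum hR0 hcrys hH (subset_refl R) hRrefl hβ'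
      rwa [DomAux.posRootsM_self] at h
    show 1 ≤ 2 * ⟪ν, δ⟫ / ⟪δ, δ⟫
    rw [e1, e2, inner_add_left]
    have hsplit : 2 * (⟪lam, β⟫ + ⟪halfSum (posRoots R H), β⟫) / ⟪β, β⟫
        = 2 * ⟪lam, β⟫ / ⟪β, β⟫ + 2 * ⟪halfSum (posRoots R H), β⟫ / ⟪β, β⟫ := by
      field_simp
    rw [hsplit]
    linarith
  have hfin := DomAux.dominant_sub_halfSum hR0 hRred hcrys hH hRM hclosed hν α hα
  have hAnn : (0 : ℝ) ≤ ⟪α, α⟫ := real_inner_self_nonneg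
  exact div_nonneg (by linarith) hAnn
end

section
/- Let λ ∈ V be dominant integral for R⁺ and w_u ∈ W^M, and set λ_u = w_u(λ+ρ) − ρ_M. Then P_M(λ_u) / P(λ) = ( Π_{α∈R⁺} ⟨ρ,α⟩ / Π_{α∈R⁺∩R_M} ⟨ρ_M,α⟩ ) · ( Π_{α ∈ R⁺ ∖ w_u⁻¹(R⁺∩R_M)} ⟨λ+ρ, α⟩ )⁻¹. -/
open scoped RealInnerProductSpace

/-- The Weyl polynomial `P(μ) = Π_{α ∈ P} ⟨μ+ρ,α⟩ / ⟨ρ,α⟩` attached to a set `P` of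
positive roots with half sum `ρ = halfSum P`. -/
noncomputable def weylPoly {V : Type} [NormedAddCommGroup V] [InnerProductSpace ℝ V]
    (P : Finset V) (μ : V) : ℝ :=
  ∏ α ∈ P, (⟪μ + halfSum P, α⟫ / ⟪halfSum P, α⟫)

/-! Since `w_u` is orthogonal, `⟨w_u Λ, β⟩ = ⟨Λ, w_u⁻¹ β⟩` for `Λ = λ + ρ`, so the numerator
of `P_M(λ_u)` is the product of `⟨Λ, α⟩` over `w_u⁻¹(R⁺ ∩ R_M)`, a subset of `R⁺` by the
defining property of `W^M`. It therefore cancels against part of the numerator of `P(λ)`; the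
cancelled factors are nonzero because `⟨Λ, α⟩ = ⟨λ, α⟩ + ⟨ρ, α⟩` with `⟨λ, α⟩ ≥ 0` by dominance
and `⟨ρ, α⟩ > 0` for every positive root. -/

section Reflection

variable {V : Type} [NormedAddCommGroup V] [InnerProductSpace ℝ V]

lemma sRefl_self (α : V) (hα : α ≠ 0) : sRefl α α = -α := by
  have h2 : (2 * ⟪α, α⟫ / ⟪α, α⟫ : ℝ) = 2 := by
    field_simp [inner_self_ne_zero.mpr hα]
  rw [sRefl, h2, two_smul]
  abel

lemma inner_sRefl_left_self (α x : V) : ⟪sRefl α x, α⟫ = -⟪x, α⟫ := by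
  rcases eq_or_ne α 0 with rfl | hα
  · simp
  · have hs : ⟪α, α⟫ ≠ (0 : ℝ) := inner_self_ne_zero.mpr hα
    simp only [sRefl, inner_sub_left, real_inner_smul_left]
    field_simp
    ring

lemma sRefl_sRefl (α x : V) : sRefl α (sRefl α x) = x := by
  conv_lhs => rw [sRefl, inner_sRefl_left_self, sRefl]
  match_scalars <;> ring

lemma inner_sRefl_sRefl (α x y : V) : ⟪sRefl α x, sRefl α y⟫ = ⟪x, y⟫ := by
  rcases eq_or_ne α 0 with rfl | hα
  · simp [sRefl]
  · have hs : ⟪α, α⟫ ≠ (0 : ℝ) := inner_self_ne_zero.mpr hα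
    simp only [sRefl, inner_sub_left, inner_sub_right, real_inner_smul_left,
      real_inner_smul_right]
    rw [real_inner_comm α y]
    field_simp
    ring

lemma inner_map_map_of_mem_reflGroup {R : Finset V} {w : V ≃ₗ[ℝ] V} (hw : w ∈ reflGroup R)
    (x y : V) : ⟪w x, w y⟫ = ⟪x, y⟫ := by
  induction hw using Subgroup.closure_induction generalizing x y with
  | mem g hg =>
    obtain ⟨α, -, hg⟩ := hg
    rw [hg, hg, inner_sRefl_sRefl]
  | one => rfl
  | mul a b _ _ ha hb => exact (ha (b x) (b y)).trans (hb x y)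
  | inv a _ ha =>
    have e (z : V) : a (a⁻¹ z) = z := a.apply_symm_apply z
    rw [← ha, e, e]

lemma inner_nonneg_of_two_mul_inner_div_nonneg {x α : V} (h : 0 ≤ 2 * ⟪x, α⟫ / ⟪α, α⟫) :
    0 ≤ ⟪x, α⟫ := by
  rcases eq_or_ne α 0 with rfl | hα
  · simp
  · rw [le_div_iff₀ (real_inner_self_pos.mpr hα), zero_mul] at h
    linarith

end Reflection

section PositiveRoots

variable {V : Type} [NormedAddCommGroup V] [InnerProductSpace ℝ V]

lemma ne_zero_of_mem_posRoots {R : Finset V} {H α : V} (hα : α ∈ posRoots R H) : α ≠ 0 := by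
  rintro rfl
  simp [posRoots] at hα

/-- `⟨s_α β, H⟩ ≤ 0 < ⟨β, H⟩` forces the coefficient `2⟨β,α⟩/⟨α,α⟩` in
`β - s_α β` to be positive. -/
lemma inner_pos_of_sRefl_not_mem_posRoots {R : Finset V}
    (hRrefl : ∀ α ∈ R, ∀ β ∈ R, sRefl α β ∈ R)
    {H α β : V} (hα : α ∈ posRoots R H) (hβ : β ∈ posRoots R H)
    (hsβ : sRefl α β ∉ posRoots R H) : 0 < ⟪β, α⟫ := by
  have hs : 0 < ⟪α, α⟫ := real_inner_self_pos.mpr (ne_zero_of_mem_posRoots hα)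
  simp only [posRoots, Finset.mem_filter, not_and, not_lt] at hα hβ hsβ
  have hle : ⟪β, H⟫ - 2 * ⟪β, α⟫ / ⟪α, α⟫ * ⟪α, H⟫ ≤ 0 := by
    simpa only [sRefl, inner_sub_left, real_inner_smul_left] using
      hsβ (hRrefl α hα.1 β hβ.1)
  have hc : 0 < 2 * ⟪β, α⟫ / ⟪α, α⟫ := by nlinarith [hα.2, hβ.2]
  linarith [(div_pos_iff_of_pos_right hs).mp hc]

/-- The positive roots `β` with `s_α β` positive cancel in pairs against `⟨·, α⟩`; the
remaining ones, among them `α` itself, contribute positively. -/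
lemma inner_halfSum_posRoots_pos {R : Finset V} (hRrefl : ∀ α ∈ R, ∀ β ∈ R, sRefl α β ∈ R)
    {H α : V} (hα : α ∈ posRoots R H) : 0 < ⟪halfSum (posRoots R H), α⟫ := by
  classical
  set P := posRoots R H
  have hα0 := ne_zero_of_mem_posRoots hα
  have hcancel : ∑ β ∈ P with sRefl α β ∈ P, ⟪β, α⟫ = 0 := by
    refine Finset.sum_involution (fun β _ => sRefl α β) (fun β _ => ?_) (fun β _ hne heq => ?_)
      (fun β hβ => ?_) (fun β _ => sRefl_sRefl α β)
    · rw [inner_sRefl_left_self, add_neg_cancel]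
    · exact hne (by linarith [inner_sRefl_left_self α β, congrArg (⟪·, α⟫) heq])
    · rw [Finset.mem_filter] at hβ ⊢
      exact ⟨hβ.2, by rw [sRefl_sRefl]; exact hβ.1⟩
  have hrest : 0 < ∑ β ∈ P with sRefl α β ∉ P, ⟪β, α⟫ := by
    refine Finset.sum_pos' (fun β hβ => ?_) ⟨α, ?_, real_inner_self_pos.mpr hα0⟩
    · rw [Finset.mem_filter] at hβ
      exact (inner_pos_of_sRefl_not_mem_posRoots hRrefl hα hβ.1 hβ.2).le
    · refine Finset.mem_filter.mpr ⟨hα, fun h => ?_⟩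
      rw [sRefl_self α hα0] at h
      have h₁ := (Finset.mem_filter.mp h).2
      have h₂ := (Finset.mem_filter.mp hα).2
      rw [inner_neg_left] at h₁
      linarith
  rw [halfSum, real_inner_smul_left, sum_inner, ← Finset.sum_filter_add_sum_filter_not P
    (fun β => sRefl α β ∈ P), hcancel, zero_add]
  positivity

lemma image_inv_posRootsM_subset [DecidableEq V] {R RM : Finset V} {H : V} {w : V ≃ₗ[ℝ] V}
    (hw : w ∈ WupperM R RM H) : (posRootsM R RM H).image (fun β => w⁻¹ β) ⊆ posRoots R H := by
  intro α hα
  obtain ⟨β, hβ, rfl⟩ := Finset.mem_image.mp hα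
  simp only [posRootsM, Finset.mem_filter] at hβ
  exact hw.2 β hβ.2 hβ.1

end PositiveRoots

section WeylPolynomial

variable {V : Type} [NormedAddCommGroup V] [InnerProductSpace ℝ V]

lemma weylPoly_eq_div (P : Finset V) (μ : V) :
    weylPoly P μ = (∏ α ∈ P, ⟪μ + halfSum P, α⟫) / ∏ α ∈ P, ⟪halfSum P, α⟫ := by
  rw [weylPoly, Finset.prod_div_distrib]

lemma weylPoly_map_sub_halfSum [DecidableEq V] (P : Finset V) {w : V ≃ₗ[ℝ] V}
    (hw : ∀ x y, ⟪w x, w y⟫ = ⟪x, y⟫) (Λ : V) :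
    weylPoly P (w Λ - halfSum P) =
      (∏ α ∈ P.image (fun β => w⁻¹ β), ⟪Λ, α⟫) / ∏ α ∈ P, ⟪halfSum P, α⟫ := by
  rw [weylPoly_eq_div, sub_add_cancel, Finset.prod_image fun x _ y _ h => w⁻¹.injective h]
  congr 1
  refine Finset.prod_congr rfl fun β _ => ?_
  have e : w (w⁻¹ β) = β := w.apply_symm_apply β
  rw [← hw Λ, e]

end WeylPolynomial

lemma div_div_mul_div_eq_div_mul_inv {K : Type*} [Field K] {a : K} (ha : a ≠ 0) (c d e : K) :
    a / d / (c * a / e) = e / d * c⁻¹ := by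
  simp only [div_eq_mul_inv, mul_inv, inv_inv]
  linear_combination (e * d⁻¹ * c⁻¹) * mul_inv_cancel₀ ha

open Classical in
theorem weylPoly_ratio_general
    {V : Type} [NormedAddCommGroup V] [InnerProductSpace ℝ V]
    (R : Finset V)
    (hRrefl : ∀ α ∈ R, ∀ β ∈ R, sRefl α β ∈ R)
    (H : V)
    (RM : Finset V)
    (lam : V)
    (hdom : ∀ α ∈ posRoots R H, ∃ k : ℕ, 2 * ⟪lam, α⟫ / ⟪α, α⟫ = (k : ℝ))
    (wu : V ≃ₗ[ℝ] V) (hwu : wu ∈ WupperM R RM H) :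
    weylPoly (posRootsM R RM H)
        (wu (lam + halfSum (posRoots R H)) - halfSum (posRootsM R RM H))
      / weylPoly (posRoots R H) lam =
    ((∏ α ∈ posRoots R H, ⟪halfSum (posRoots R H), α⟫) /
        (∏ α ∈ posRootsM R RM H, ⟪halfSum (posRootsM R RM H), α⟫)) *
      (∏ α ∈ posRoots R H \ ((posRootsM R RM H).image fun β => wu⁻¹ β),
        ⟪lam + halfSum (posRoots R H), α⟫)⁻¹ := by
  set P := posRoots R H
  set S := (posRootsM R RM H).image fun β => wu⁻¹ β
  have hΛ : ∀ α ∈ P, 0 < ⟪lam + halfSum P, α⟫ := fun α hα => by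
    obtain ⟨k, hk⟩ := hdom α hα
    rw [inner_add_left]
    exact add_pos_of_nonneg_of_pos
      (inner_nonneg_of_two_mul_inner_div_nonneg (hk ▸ k.cast_nonneg))
      (inner_halfSum_posRoots_pos hRrefl hα)
  have hSP : S ⊆ P := image_inv_posRootsM_subset hwu
  have hS : ∏ α ∈ S, ⟪lam + halfSum P, α⟫ ≠ 0 := (Finset.prod_pos fun α hα => hΛ α (hSP hα)).ne'
  rw [weylPoly_map_sub_halfSum _ (inner_map_map_of_mem_reflGroup hwu.1), weylPoly_eq_div,
    ← Finset.prod_sdiff hSP]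
  exact div_div_mul_div_eq_div_mul_inv hS _ _ _

open Classical in
/-- With `λ` dominant integral and `w_u ∈ W^M`, setting
`λ_u = w_u(λ+ρ) − ρ_M`, the ratio of Weyl polynomials is
`P_M(λ_u)/P(λ) = (Π_{α∈R⁺} ⟨ρ,α⟩ / Π_{α∈R⁺∩R_M} ⟨ρ_M,α⟩) · (Π_{α∈R⁺∖w_u⁻¹(R⁺∩R_M)} ⟨λ+ρ,α⟩)⁻¹`. -/
theorem weylPoly_ratio
    {V : Type} [NormedAddCommGroup V] [InnerProductSpace ℝ V] [FiniteDimensional ℝ V]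
    (R : Finset V) (hR0 : (0 : V) ∉ R)
    (hRrefl : ∀ α ∈ R, ∀ β ∈ R, sRefl α β ∈ R)
    (hRred : ∀ α ∈ R, ∀ c : ℝ, c • α ∈ R → c = 1 ∨ c = -1)
    (hcrys : ∀ α ∈ R, ∀ β ∈ R, ∃ k : ℤ, 2 * ⟪α, β⟫ / ⟪β, β⟫ = (k : ℝ))
    (H : V) (hH : ∀ α ∈ R, ⟪α, H⟫ ≠ 0)
    (RM : Finset V) (hRM : RM ⊆ R)
    (hclosed : ∀ α ∈ RM, ∀ β ∈ RM, sRefl α β ∈ RM)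
    (lam : V)
    (hdom : ∀ α ∈ posRoots R H, ∃ k : ℕ, 2 * ⟪lam, α⟫ / ⟪α, α⟫ = (k : ℝ))
    (wu : V ≃ₗ[ℝ] V) (hwu : wu ∈ WupperM R RM H) :
    weylPoly (posRootsM R RM H)
        (wu (lam + halfSum (posRoots R H)) - halfSum (posRootsM R RM H))
      / weylPoly (posRoots R H) lam =
    ((∏ α ∈ posRoots R H, ⟪halfSum (posRoots R H), α⟫) /
        (∏ α ∈ posRootsM R RM H, ⟪halfSum (posRootsM R RM H), α⟫)) *
      (∏ α ∈ posRoots R H \ ((posRootsM R RM H).image fun β => wu⁻¹ β),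
        ⟪lam + halfSum (posRoots R H), α⟫)⁻¹ :=
  weylPoly_ratio_general R hRrefl H RM lam hdom wu hwu
end

section
/- Let n ≥ 1, let x₁, …, x_n be nonzero complex numbers, and let x = diag(x₁, …, x_n, x_n⁻¹, …, x₁⁻¹) ∈ GL_{2n}(ℂ). Let J ∈ GL_{2n}(ℂ) be the antidiagonal matrix with entries J_{i,2n+1−i} = 1 and all other entries 0. Let 𝔩 be the complex vector space of strictly upper-triangular 2n×2n complex matrices. Then the linear map T : 𝔩 → 𝔩 given by T(X) = −J · ᵗ(x X x⁻¹) · J is well defined (it maps 𝔩 into itself), and det(id_𝔩 − T) = Π_{i=1}^{n} (1 + x_i²) · Π_{1≤i<j≤n} (1 − x_i² x_j⁻²) · Π_{1≤i<j≤n} (1 − x_i² x_j²). -/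
open Matrix

/-- The antidiagonal matrix `J` of size `m`, with `J_{i, m+1-i} = 1` (1-indexed). -/
def Jmat (m : ℕ) : Matrix (Fin m) (Fin m) ℂ :=
  Matrix.of fun i j => if (i : ℕ) + (j : ℕ) = m - 1 then 1 else 0

/-- The entries `(x₁, …, x_n, x_n⁻¹, …, x₁⁻¹)` of the diagonal matrix `x`. -/
noncomputable def diagEntries (n : ℕ) (xv : Fin n → ℂ) (i : Fin (2 * n)) : ℂ :=
  if h : (i : ℕ) < n then xv ⟨i, h⟩
  else (xv ⟨2 * n - 1 - i, by have := i.isLt; omega⟩)⁻¹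

/-- The space `𝔩` of strictly upper-triangular `m × m` complex matrices. -/
noncomputable def strictUpper (m : ℕ) : Submodule ℂ (Matrix (Fin m) (Fin m) ℂ) where
  carrier := {X | ∀ i j : Fin m, j ≤ i → X i j = 0}
  add_mem' := by
    intro X Y hX hY i j hij
    simp [Matrix.add_apply, hX i j hij, hY i j hij]
  zero_mem' := by intro i j hij; simp
  smul_mem' := by
    intro c X hX i j hij
    simp [Matrix.smul_apply, hX i j hij]

/-- The linear endomorphism `T(X) = −J ᵗ(x X x⁻¹) J` of the space of `2n × 2n`
complex matrices. -/
noncomputable def Tlin (n : ℕ) (xv : Fin n → ℂ) :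
    Matrix (Fin (2 * n)) (Fin (2 * n)) ℂ →ₗ[ℂ] Matrix (Fin (2 * n)) (Fin (2 * n)) ℂ where
  toFun X :=
    -(Jmat (2 * n) *
        (Matrix.diagonal (diagEntries n xv) * X * (Matrix.diagonal (diagEntries n xv))⁻¹)ᵀ *
        Jmat (2 * n))
  map_add' X Y := by
    simp only [Matrix.mul_add, Matrix.add_mul, Matrix.transpose_add, neg_add]
  map_smul' c X := by
    simp [Matrix.mul_smul, Matrix.smul_mul, Matrix.transpose_smul]

/-! The matrix of `T` in the basis `E_{ij}` (`i < j`) of `𝔩` is a weighted permutation matrix: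
with `d = (x₁, …, x_n, x_n⁻¹, …, x₁⁻¹)` and `k' = 2n + 1 - k`, `T E_{ij} = -(d_i / d_j) E_{j'i'}`.
The anti-transposition `(i, j) ↦ (j', i')` is an involution and the weight `d_i / d_j` is constant
on its orbits, so after reordering the basis `id - T` is block diagonal: a `1 × 1` block `1 + x_i²`
at each fixed point `(i, i')`, and a block `!![1, c; c, 1]` of determinant `1 - c²` on each
two-element orbit. The orbit representatives above the antidiagonal are the `(i, j)` and `(i, j')`
with `i < j ≤ n`, of weights `c = x_i / x_j` and `c = x_i x_j`. -/

namespace Function.Involutive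

variable {ι : Type*} {σ : ι → ι} {p : ι → Prop}

/- Throughout, `hp` says that `p` picks exactly one point of each two-element orbit of `σ`
and no fixed point. -/
lemma apply_ne_self_of_rep (hσ : Involutive σ) (hp : ∀ q, p (σ q) ↔ σ q ≠ q ∧ ¬ p q)
    {q : ι} (hq : p q) : σ q ≠ q := by
  have h := hp (σ q)
  rw [hσ q] at h
  exact (h.1 hq).1.symm

lemma not_rep_apply_of_rep (hp : ∀ q, p (σ q) ↔ σ q ≠ q ∧ ¬ p q) {q : ι} (hq : p q) :
    ¬ p (σ q) :=
  fun h => ((hp q).1 h).2 hq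

def orbitEquiv [DecidableEq ι] [DecidablePred p] (hσ : Involutive σ)
    (hp : ∀ q, p (σ q) ↔ σ q ≠ q ∧ ¬ p q) :
    {q // σ q = q} ⊕ Fin 2 × {q // p q} ≃ ι where
  toFun
    | .inl q => q
    | .inr (k, q) => if k = 0 then q else σ q
  invFun q :=
    if h : σ q = q then .inl ⟨q, h⟩
    else if hq : p q then .inr (0, ⟨q, hq⟩)
    else .inr (1, ⟨σ q, (hp q).2 ⟨h, hq⟩⟩)
  left_inv := by
    rintro (⟨q, hq⟩ | ⟨k, q, hq⟩)
    · simp [hq]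
    · fin_cases k
      · simp [hσ.apply_ne_self_of_rep hp hq, hq]
      · simp [(hσ.apply_ne_self_of_rep hp hq).symm, not_rep_apply_of_rep hp hq, hσ q]
  right_inv q := by
    by_cases h : σ q = q
    · simp [h]
    · by_cases hq : p q <;> simp [h, hq, hσ q]

variable {R : Type*} [CommRing R] [DecidableEq ι] [DecidablePred p]

lemma submatrix_orbitEquiv (hσ : Involutive σ) (hp : ∀ q, p (σ q) ↔ σ q ≠ q ∧ ¬ p q)
    (c : ι → R) (hc : ∀ q, c (σ q) = c q) :
    (1 + of fun i j => if i = σ j then c j else 0).submatrix (hσ.orbitEquiv hp)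
        (hσ.orbitEquiv hp) =
      fromBlocks (diagonal fun q : {q // σ q = q} => 1 + c q) 0 0
        (blockDiagonal fun q : {q // p q} => !![1, c q; c q, 1]) := by
  have hrep {q} (hq : p q) : σ q ≠ q := hσ.apply_ne_self_of_rep hp hq
  have hfix {a b} (ha : σ a = a) (hb : p b) : a ≠ b := fun h => hrep hb (h ▸ ha)
  have hfix' {a b} (ha : σ a = a) (hb : p b) : a ≠ σ b := fun h =>
    hfix ha hb (by rw [← ha, h, hσ b])
  have hrepσ {a b} (ha : p a) (hb : p b) : a ≠ σ b := fun h =>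
    not_rep_apply_of_rep hp hb (h ▸ ha)
  ext (⟨a, ha⟩ | ⟨k, a, ha⟩) (⟨b, hb⟩ | ⟨l, b, hb⟩)
  · by_cases hab : a = b
    · subst hab; simp [orbitEquiv, ha]
    · simp [orbitEquiv, hab, hb, Subtype.ext_iff]
  · fin_cases l <;> simp [orbitEquiv, one_apply, hσ b, hfix ha hb, hfix' ha hb]
  · fin_cases k <;>
      simp [orbitEquiv, one_apply, hb, (hfix hb ha).symm, (hfix' hb ha).symm]
  · by_cases hab : a = b
    · subst hab
      fin_cases k <;> fin_cases l <;>
        simp [orbitEquiv, blockDiagonal_apply, one_apply, hσ a, hrep ha, (hrep ha).symm, hc]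
    · fin_cases k <;> fin_cases l <;>
        simp [orbitEquiv, blockDiagonal_apply, one_apply, hσ b, hab, hσ.injective.eq_iff,
          hrepσ ha hb, (hrepσ hb ha).symm, Subtype.ext_iff]

theorem det_one_add [Fintype ι] (hσ : Involutive σ) (hp : ∀ q, p (σ q) ↔ σ q ≠ q ∧ ¬ p q)
    (c : ι → R) (hc : ∀ q, c (σ q) = c q) :
    (1 + of fun i j => if i = σ j then c j else 0).det =
      (∏ q ∈ Finset.univ.filter (fun q => σ q = q), (1 + c q)) *
        ∏ q ∈ Finset.univ.filter p, (1 - c q ^ 2) := by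
  rw [← det_submatrix_equiv_self (hσ.orbitEquiv hp), hσ.submatrix_orbitEquiv hp c hc,
    det_fromBlocks_zero₂₁, det_diagonal, det_blockDiagonal]
  simp only [det_fin_two_of, ← sq, one_pow]
  rw [← Finset.prod_subtype (Finset.univ.filter fun q => σ q = q) (by simp) (fun q => 1 + c q),
    ← Finset.prod_subtype (Finset.univ.filter p) (by simp) (fun q => 1 - c q ^ 2)]

end Function.Involutive

lemma Fin.val_rev_eq_sub {m : ℕ} (i : Fin m) : (i.rev : ℕ) = m - 1 - i := by
  rw [Fin.val_rev]; omega

lemma Jmat_mul_apply {m : ℕ} (Z : Matrix (Fin m) (Fin m) ℂ) (a b : Fin m) :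
    (Jmat m * Z) a b = Z a.rev b := by
  have h (k : Fin m) : (a : ℕ) + k = m - 1 ↔ k = a.rev := by
    rw [Fin.ext_iff, Fin.val_rev_eq_sub]; omega
  simp [mul_apply, Jmat, h]

lemma mul_Jmat_apply {m : ℕ} (Z : Matrix (Fin m) (Fin m) ℂ) (a b : Fin m) :
    (Z * Jmat m) a b = Z a b.rev := by
  have h (k : Fin m) : (k : ℕ) + b = m - 1 ↔ k = b.rev := by
    rw [Fin.ext_iff, Fin.val_rev_eq_sub]; omega
  simp [mul_apply, Jmat, h]

section diagEntries

variable {n : ℕ} (xv : Fin n → ℂ)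

lemma diagEntries_castLE (i : Fin n) : diagEntries n xv (Fin.castLE (by omega) i) = xv i :=
  dif_pos i.2

lemma diagEntries_rev (i : Fin (2 * n)) :
    diagEntries n xv i.rev = (diagEntries n xv i)⁻¹ := by
  have hrev := Fin.val_rev_eq_sub i
  unfold diagEntries
  split_ifs
  · omega
  · rw [inv_inv]; congr 1; ext; simp only; omega
  · congr 2; ext; simp only; omega
  · omega

lemma diagEntries_ne_zero {xv : Fin n → ℂ} (hx : ∀ i, xv i ≠ 0) (i : Fin (2 * n)) :
    diagEntries n xv i ≠ 0 := by
  unfold diagEntries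
  split
  · exact hx _
  · exact inv_ne_zero (hx _)

end diagEntries

lemma Tlin_apply {n : ℕ} {xv : Fin n → ℂ} (hx : ∀ i, xv i ≠ 0)
    (X : Matrix (Fin (2 * n)) (Fin (2 * n)) ℂ) (a b : Fin (2 * n)) :
    Tlin n xv X a b = -(diagEntries n xv b.rev / diagEntries n xv a.rev * X b.rev a.rev) := by
  have hinv : (diagonal (diagEntries n xv))⁻¹ = diagonal fun i => (diagEntries n xv i)⁻¹ :=
    inv_eq_right_inv <| by
      simp [diagonal_mul_diagonal, mul_inv_cancel₀ (diagEntries_ne_zero hx _)]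
  simp only [Tlin, LinearMap.coe_mk, AddHom.coe_mk, Matrix.neg_apply, mul_Jmat_apply,
    Jmat_mul_apply, transpose_apply, hinv, mul_diagonal, diagonal_mul]
  ring

lemma Tlin_mem_strictUpper {n : ℕ} {xv : Fin n → ℂ} (hx : ∀ i, xv i ≠ 0) :
    ∀ X ∈ strictUpper (2 * n), Tlin n xv X ∈ strictUpper (2 * n) := fun X hX i j hij => by
  rw [Tlin_apply hx, hX _ _ (Fin.rev_le_rev.mpr hij), mul_zero, neg_zero]

abbrev UpperIndex (m : ℕ) := {p : Fin m × Fin m // p.1 < p.2}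

noncomputable def strictUpperEquivFun (m : ℕ) : strictUpper m ≃ₗ[ℂ] (UpperIndex m → ℂ) where
  toFun X q := X.1 q.1.1 q.1.2
  map_add' _ _ := rfl
  map_smul' _ _ := rfl
  invFun f := ⟨of fun i j => if h : i < j then f ⟨(i, j), h⟩ else 0,
    fun _ _ hij => dif_neg hij.not_gt⟩
  left_inv X := by
    ext i j
    by_cases h : i < j
    · simp [h]
    · simp [h, X.2 i j (not_lt.mp h)]
  right_inv f := by
    ext q
    simp [q.2]

noncomputable def strictUpperBasis (m : ℕ) : Module.Basis (UpperIndex m) ℂ (strictUpper m) :=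
  .ofEquivFun (strictUpperEquivFun m)

lemma strictUpperBasis_apply {m : ℕ} (q : UpperIndex m) (i j : Fin m) :
    (strictUpperBasis m q : Matrix (Fin m) (Fin m) ℂ) i j = if (i, j) = q.1 then 1 else 0 := by
  by_cases h : i < j
  · simp [strictUpperBasis, strictUpperEquivFun, h, Pi.single_apply, Subtype.ext_iff]
  · have hq : (i, j) ≠ q.1 := fun hij => h (by simpa [← hij] using q.2)
    simp [strictUpperBasis, strictUpperEquivFun, h, hq]

lemma strictUpperBasis_repr {m : ℕ} (X : strictUpper m) (q : UpperIndex m) :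
    (strictUpperBasis m).repr X q = X.1 q.1.1 q.1.2 := rfl

namespace UpperIndex

variable {m : ℕ}

def antiTranspose (q : UpperIndex m) : UpperIndex m :=
  ⟨(q.1.2.rev, q.1.1.rev), Fin.rev_lt_rev.mpr q.2⟩

lemma antiTranspose_involutive : Function.Involutive (antiTranspose (m := m)) := fun q => by
  simp [antiTranspose]

lemma eq_antiTranspose_iff (p q : UpperIndex m) :
    p = q.antiTranspose ↔ (p.1.2.rev, p.1.1.rev) = q.1 := by
  rw [← antiTranspose_involutive.eq_iff, Subtype.ext_iff]
  rfl

lemma antiTranspose_eq_self_iff (q : UpperIndex m) :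
    q.antiTranspose = q ↔ (q.1.1 : ℕ) + q.1.2 + 1 = m := by
  simp only [antiTranspose, Subtype.ext_iff, Prod.ext_iff, Fin.ext_iff, Fin.val_rev_eq_sub]
  omega

def AboveAntidiag (q : UpperIndex m) : Prop := (q.1.1 : ℕ) + q.1.2 + 1 < m

instance : DecidablePred (AboveAntidiag (m := m)) := fun q =>
  inferInstanceAs (Decidable ((q.1.1 : ℕ) + q.1.2 + 1 < m))

lemma aboveAntidiag_antiTranspose_iff (q : UpperIndex m) :
    q.antiTranspose.AboveAntidiag ↔ q.antiTranspose ≠ q ∧ ¬ q.AboveAntidiag := by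
  rw [Ne, antiTranspose_eq_self_iff]
  simp only [AboveAntidiag, antiTranspose, Fin.val_rev_eq_sub]
  omega

end UpperIndex

noncomputable def diagRatio {n : ℕ} (xv : Fin n → ℂ) (q : UpperIndex (2 * n)) : ℂ :=
  diagEntries n xv q.1.1 / diagEntries n xv q.1.2

lemma diagRatio_antiTranspose {n : ℕ} (xv : Fin n → ℂ) (q : UpperIndex (2 * n)) :
    diagRatio xv q.antiTranspose = diagRatio xv q := by
  rw [diagRatio, diagRatio, UpperIndex.antiTranspose, diagEntries_rev, diagEntries_rev,
    inv_div_inv]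

lemma toMatrix_id_sub_Tlin {n : ℕ} {xv : Fin n → ℂ} (hx : ∀ i, xv i ≠ 0)
    (h : ∀ X ∈ strictUpper (2 * n), Tlin n xv X ∈ strictUpper (2 * n)) :
    LinearMap.toMatrix (strictUpperBasis _) (strictUpperBasis _)
        (LinearMap.id - (Tlin n xv).restrict h) =
      1 + of fun p q => if p = q.antiTranspose then diagRatio xv q else 0 := by
  ext p q
  rw [LinearMap.toMatrix_apply, strictUpperBasis_repr]
  simp only [LinearMap.sub_apply, LinearMap.id_apply, Submodule.coe_sub,
    LinearMap.coe_restrict_apply, Matrix.sub_apply, Tlin_apply hx, strictUpperBasis_apply,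
    ← UpperIndex.eq_antiTranspose_iff, Prod.mk.eta, ← Subtype.ext_iff, Matrix.add_apply,
    one_apply, of_apply]
  by_cases hpq : p = q.antiTranspose
  · simp [hpq, diagRatio, UpperIndex.antiTranspose]
  · simp [hpq]

lemma prod_prod_filter_lt {n : ℕ} {M : Type*} [CommMonoid M] (f : Fin n → Fin n → M) :
    ∏ i, ∏ j ∈ Finset.univ.filter (fun j => i < j), f i j =
      ∏ ij ∈ Finset.univ.filter (fun ij : Fin n × Fin n => ij.1 < ij.2), f ij.1 ij.2 :=
  (Finset.prod_finset_product (Finset.univ.filter fun ij : Fin n × Fin n => ij.1 < ij.2)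
    Finset.univ (fun i => Finset.univ.filter (fun j => i < j)) (by simp)
    (f := fun ij => f ij.1 ij.2)).symm

section products

variable {n : ℕ} (xv : Fin n → ℂ)

lemma prod_antiTranspose_fixed :
    ∏ q ∈ Finset.univ.filter (fun q : UpperIndex (2 * n) => q.antiTranspose = q),
        (1 + diagRatio xv q) = ∏ i, (1 + xv i ^ 2) := by
  symm
  refine Finset.prod_bij (fun i _ => ⟨(Fin.castLE (by omega) i, (Fin.castLE (by omega) i).rev),
    by simp [Fin.lt_def]; omega⟩) ?_ ?_ ?_ ?_
  · simp [UpperIndex.antiTranspose_eq_self_iff]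
    omega
  · intro i _ j _ h
    exact Fin.castLE_injective (by omega) (congrArg (fun q : UpperIndex (2 * n) => q.1.1) h)
  · rintro ⟨⟨a, b⟩, hab⟩ h
    simp only [Finset.mem_filter_univ, UpperIndex.antiTranspose_eq_self_iff] at h
    have : (a : ℕ) < b := hab
    refine ⟨⟨a, by omega⟩, Finset.mem_univ _, ?_⟩
    simp [Fin.ext_iff]
    omega
  · intro i _
    simp [diagRatio, diagEntries_rev, diagEntries_castLE, sq]

lemma prod_aboveAntidiag_upperLeft :
    ∏ q ∈ Finset.univ.filter
        (fun q : UpperIndex (2 * n) => q.AboveAntidiag ∧ (q.1.2 : ℕ) < n),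
        (1 - diagRatio xv q ^ 2) =
      ∏ i, ∏ j ∈ Finset.univ.filter (fun j => i < j), (1 - xv i ^ 2 / xv j ^ 2) := by
  rw [prod_prod_filter_lt]
  symm
  refine Finset.prod_bij (fun ij hij => ⟨(Fin.castLE (by omega) ij.1, Fin.castLE (by omega) ij.2),
    by simpa using hij⟩) ?_ ?_ ?_ ?_
  · intro ij hij
    rw [Finset.mem_filter_univ, Fin.lt_def] at hij
    rw [Finset.mem_filter_univ]
    simp only [UpperIndex.AboveAntidiag, Fin.val_castLE]
    omega
  · intro ij _ kl _ h
    simp only [Subtype.mk.injEq, Prod.mk.injEq, Fin.castLE_inj] at h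
    exact Prod.ext h.1 h.2
  · rintro ⟨⟨a, b⟩, hab⟩ h
    simp only [Finset.mem_filter_univ] at h
    unfold UpperIndex.AboveAntidiag at h
    have : (a : ℕ) < b := hab
    exact ⟨(⟨a, by omega⟩, ⟨b, h.2⟩), by simpa using this, rfl⟩
  · intro ij _
    simp [diagRatio, diagEntries_castLE, div_pow]

lemma prod_aboveAntidiag_upperRight :
    ∏ q ∈ Finset.univ.filter
        (fun q : UpperIndex (2 * n) => q.AboveAntidiag ∧ ¬ (q.1.2 : ℕ) < n),
        (1 - diagRatio xv q ^ 2) =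
      ∏ i, ∏ j ∈ Finset.univ.filter (fun j => i < j), (1 - xv i ^ 2 * xv j ^ 2) := by
  rw [prod_prod_filter_lt]
  symm
  refine Finset.prod_bij (fun ij hij => ⟨(Fin.castLE (by omega) ij.1,
    (Fin.castLE (by omega) ij.2).rev), by simp [Fin.lt_def]; omega⟩) ?_ ?_ ?_ ?_
  · simp [UpperIndex.AboveAntidiag]
    omega
  · intro ij _ kl _ h
    simp only [Subtype.mk.injEq, Prod.mk.injEq, Fin.rev_inj, Fin.castLE_inj] at h
    exact Prod.ext h.1 h.2
  · rintro ⟨⟨a, b⟩, hab⟩ h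
    simp only [Finset.mem_filter_univ] at h
    simp only [UpperIndex.AboveAntidiag, not_lt] at h
    refine ⟨(⟨a, by omega⟩, ⟨2 * n - 1 - b, by omega⟩), by simp; omega, ?_⟩
    simp [Fin.ext_iff]
    omega
  · intro ij _
    simp [diagRatio, diagEntries_castLE, diagEntries_rev, mul_pow]

lemma prod_aboveAntidiag :
    ∏ q ∈ Finset.univ.filter (UpperIndex.AboveAntidiag (m := 2 * n)),
        (1 - diagRatio xv q ^ 2) =
      (∏ i, ∏ j ∈ Finset.univ.filter (fun j => i < j), (1 - xv i ^ 2 / xv j ^ 2)) *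
        ∏ i, ∏ j ∈ Finset.univ.filter (fun j => i < j), (1 - xv i ^ 2 * xv j ^ 2) := by
  rw [← Finset.prod_filter_mul_prod_filter_not _ (fun q : UpperIndex (2 * n) => (q.1.2 : ℕ) < n),
    Finset.filter_filter, Finset.filter_filter, prod_aboveAntidiag_upperLeft,
    prod_aboveAntidiag_upperRight]

end products

theorem det_one_sub_T_general
    (n : ℕ) (xv : Fin n → ℂ) (hx : ∀ i, xv i ≠ 0) :
    ∃ h : ∀ X ∈ strictUpper (2 * n), Tlin n xv X ∈ strictUpper (2 * n),
      LinearMap.det (LinearMap.id - (Tlin n xv).restrict h) =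
        (∏ i : Fin n, (1 + xv i ^ 2)) *
        (∏ i : Fin n, ∏ j ∈ Finset.univ.filter (fun j => i < j),
          (1 - xv i ^ 2 / xv j ^ 2)) *
        (∏ i : Fin n, ∏ j ∈ Finset.univ.filter (fun j => i < j),
          (1 - xv i ^ 2 * xv j ^ 2)) := by
  refine ⟨Tlin_mem_strictUpper hx, ?_⟩
  rw [← LinearMap.det_toMatrix (strictUpperBasis _), toMatrix_id_sub_Tlin hx,
    UpperIndex.antiTranspose_involutive.det_one_add UpperIndex.aboveAntidiag_antiTranspose_iff _
      (diagRatio_antiTranspose xv),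
    prod_antiTranspose_fixed, prod_aboveAntidiag, mul_assoc]

/-- For nonzero `x₁, …, x_n` and `x = diag(x₁, …, x_n, x_n⁻¹, …, x₁⁻¹)`,
the map `T(X) = −J ᵗ(x X x⁻¹) J` preserves the space `𝔩` of strictly upper-triangular
`2n × 2n` matrices, and the determinant of `id − T` on `𝔩` is
`Π_i (1 + x_i²) · Π_{i<j} (1 − x_i²/x_j²) · Π_{i<j} (1 − x_i² x_j²)`. -/
theorem det_one_sub_T
    (n : ℕ) (hn : 1 ≤ n) (xv : Fin n → ℂ) (hx : ∀ i, xv i ≠ 0) :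
    ∃ h : ∀ X ∈ strictUpper (2 * n), Tlin n xv X ∈ strictUpper (2 * n),
      LinearMap.det (LinearMap.id - (Tlin n xv).restrict h) =
        (∏ i : Fin n, (1 + xv i ^ 2)) *
        (∏ i : Fin n, ∏ j ∈ Finset.univ.filter (fun j => i < j),
          (1 - xv i ^ 2 / xv j ^ 2)) *
        (∏ i : Fin n, ∏ j ∈ Finset.univ.filter (fun j => i < j),
          (1 - xv i ^ 2 * xv j ^ 2)) :=
  det_one_sub_T_general n xv hx
end
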